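/- For the Kerr metric in Boyer–Lindquist coordinates, set β(r,θ) = Σ = r² + a²cos²θ and λ(r,θ) = Σ/Δ, and let 𝒢(r,θ) = [[g_tt, g_tφ],[g_tφ, g_φφ]] be the Gram matrix of ∂_t, ∂_φ (which is invertible on U since det 𝒢 = −Δ sin²θ ≠ 0). Then on the open subset of U where additionally r ≠ 0: (a) the compatibility condition ∂_θ(λ · ∂_r ln β) = 0 holds — indeed λ · ∂_r ln β = 2r/Δ; (b) the integrability condition ∂_θ( (𝒢⁻¹)^{ab} + (∂_r ln β)⁻¹ · ∂_r(𝒢⁻¹)^{ab} ) = 0 holds for all a, b ∈ {t, φ}. -/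

import Mathlib

open Real

noncomputable section

namespace Kerr

variable (M a : ℝ)

def Δ (r : ℝ) : ℝ := r * (r - 2*M) + a^2
def Sig (r θ : ℝ) : ℝ := r^2 + a^2 * (Real.cos θ)^2
def f (r θ : ℝ) : ℝ := (Δ M a r - a^2 * (Real.sin θ)^2) / Sig a r θ
def ω (r θ : ℝ) : ℝ :=
  -(2*M*a*r * (Real.sin θ)^2) / (Δ M a r - a^2 * (Real.sin θ)^2)

def g_tt (r θ : ℝ) : ℝ := -(f M a r θ)
def g_tφ (r θ : ℝ) : ℝ := f M a r θ * ω M a r θ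
def g_φφ (r θ : ℝ) : ℝ :=
  Sig a r θ * Δ M a r * (Real.sin θ)^2 / (Δ M a r - a^2 * (Real.sin θ)^2)
    - f M a r θ * (ω M a r θ)^2

/-- The Gram matrix `𝒢 = [[g_tt, g_tφ],[g_tφ, g_φφ]]` of the Killing vectors
`∂_t, ∂_φ` of the Kerr metric. -/
def Gram (r θ : ℝ) : Matrix (Fin 2) (Fin 2) ℝ :=
  Matrix.of ![![g_tt M a r θ, g_tφ M a r θ], ![g_tφ M a r θ, g_φφ M a r θ]]

/-- `β = Σ`, the `θθ`-coefficient of the Kerr metric.  -/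
def β (r θ : ℝ) : ℝ := Sig a r θ

/-- `λ = Σ/Δ`, the `rr`-coefficient of the Kerr metric. -/
def lam (r θ : ℝ) : ℝ := Sig a r θ / Δ M a r

end Kerr

namespace KerrAux

open Kerr

/-- Explicit inverse-Gram entries. -/
def h00 (M a r θ : ℝ) : ℝ :=
  -1 - (2*M*r^3 + 2*M*a^2*r) / (Sig a r θ * Δ M a r)

def h01 (M a r θ : ℝ) : ℝ := -(2*M*a*r) / (Sig a r θ * Δ M a r)

def h11 (M a r θ : ℝ) : ℝ :=
  (Δ M a r - a^2 * (Real.sin θ)^2) / (Sig a r θ * Δ M a r * (Real.sin θ)^2)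

def Hm (M a r θ : ℝ) : Matrix (Fin 2) (Fin 2) ℝ :=
  Matrix.of ![![h00 M a r θ, h01 M a r θ], ![h01 M a r θ, h11 M a r θ]]

def q (M a r θ : ℝ) : ℝ := Sig a r θ * Δ M a r
def qp (M a r θ : ℝ) : ℝ := 2*r * Δ M a r + Sig a r θ * (2*r - 2*M)

def dh00 (M a r θ : ℝ) : ℝ :=
  -(((6*M*r^2 + 2*M*a^2) * q M a r θ - (2*M*r^3 + 2*M*a^2*r) * qp M a r θ) / q M a r θ ^ 2)

def dh01 (M a r θ : ℝ) : ℝ :=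
  (-(2*M*a) * q M a r θ - -(2*M*a*r) * qp M a r θ) / q M a r θ ^ 2

def dh11 (M a r θ : ℝ) : ℝ :=
  ((2*r - 2*M) * (q M a r θ * (Real.sin θ)^2)
      - (Δ M a r - a^2 * (Real.sin θ)^2) * (qp M a r θ * (Real.sin θ)^2))
    / (q M a r θ * (Real.sin θ)^2) ^ 2

/-- The constants (θ-independent values) of the integrability expression. -/
def C00 (M a r : ℝ) : ℝ :=
  -1 - (2*M*(3*r^2 + a^2) * Δ M a r - (2*M*r^3 + 2*M*a^2*r)*(2*r - 2*M))
        / (2*r * (Δ M a r)^2)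

def C01 (M a r : ℝ) : ℝ :=
  (-(2*M*a) * Δ M a r + 2*M*a*r*(2*r - 2*M)) / (2*r * (Δ M a r)^2)

def C11 (M a r : ℝ) : ℝ :=
  a^2/(r^2 + a^2)^2 + (-(2*a^2*r)/(r^2 + a^2)^2 + a^2*(2*r - 2*M)/(Δ M a r)^2)/(2*r)

def Cmat (M a r : ℝ) : Matrix (Fin 2) (Fin 2) ℝ :=
  Matrix.of ![![C00 M a r, C01 M a r], ![C01 M a r, C11 M a r]]

lemma hasDerivAt_Sig (a θ r : ℝ) : HasDerivAt (fun r' => Sig a r' θ) (2*r) r := by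
  unfold Sig
  simpa using (hasDerivAt_pow 2 r).add_const (a^2 * (Real.cos θ)^2)

lemma hasDerivAt_Delta (M a r : ℝ) : HasDerivAt (fun r' => Δ M a r') (2*r - 2*M) r := by
  unfold Δ
  have h := ((hasDerivAt_id r).mul ((hasDerivAt_id r).sub_const (2*M))).add_const (a^2)
  refine h.congr_deriv ?_
  simp only [id_eq]
  ring

lemma hasDerivAt_q (M a : ℝ) {r : ℝ} (θ : ℝ) :
    HasDerivAt (fun r' => Sig a r' θ * Δ M a r') (qp M a r θ) r :=
  (hasDerivAt_Sig a θ r).mul (hasDerivAt_Delta M a r)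

lemma hasDerivAt_h00 (M a : ℝ) {r : ℝ} (θ : ℝ) (hq : Sig a r θ * Δ M a r ≠ 0) :
    HasDerivAt (fun r' => h00 M a r' θ) (dh00 M a r θ) r := by
  have hp : HasDerivAt (fun r' : ℝ => 2*M*r'^3 + 2*M*a^2*r') (6*M*r^2 + 2*M*a^2) r := by
    have h1 := ((hasDerivAt_pow 3 r).const_mul (2*M)).add ((hasDerivAt_id r).const_mul (2*M*a^2))
    refine h1.congr_deriv ?_
    norm_num
    ring
  have h := (hp.div (hasDerivAt_q M a θ) hq).const_sub (-1)
  unfold h00 dh00 q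
  exact h

lemma hasDerivAt_h01 (M a : ℝ) {r : ℝ} (θ : ℝ) (hq : Sig a r θ * Δ M a r ≠ 0) :
    HasDerivAt (fun r' => h01 M a r' θ) (dh01 M a r θ) r := by
  have hp : HasDerivAt (fun r' : ℝ => -(2*M*a*r')) (-(2*M*a)) r := by
    exact ((hasDerivAt_id r).const_mul (2*M*a)).neg.congr_deriv (by ring)
  exact hp.div (hasDerivAt_q M a θ) hq

lemma hasDerivAt_h11 (M a : ℝ) {r : ℝ} (θ : ℝ)
    (hq : Sig a r θ * Δ M a r * (Real.sin θ)^2 ≠ 0) :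
    HasDerivAt (fun r' => h11 M a r' θ) (dh11 M a r θ) r := by
  have hp : HasDerivAt (fun r' => Δ M a r' - a^2*(Real.sin θ)^2) (2*r - 2*M) r :=
    (hasDerivAt_Delta M a r).sub_const _
  have hq' : HasDerivAt (fun r' => Sig a r' θ * Δ M a r' * (Real.sin θ)^2)
      (qp M a r θ * (Real.sin θ)^2) r := (hasDerivAt_q M a θ).mul_const _
  exact hp.div hq' hq

/-- The explicit inverse of the Gram matrix. -/
lemma gram_inv (M a r θ : ℝ) (hΔ : Δ M a r ≠ 0) (hSg : Sig a r θ ≠ 0)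
    (hs : Real.sin θ ≠ 0) (hD : Δ M a r - a^2 * (Real.sin θ)^2 ≠ 0) :
    (Gram M a r θ)⁻¹ = Hm M a r θ := by
  apply Matrix.inv_eq_right_inv
  have hSg' : r^2 + a^2 * (1 - Real.sin θ^2) ≠ 0 := by
    rwa [Sig, Real.cos_sq'] at hSg
  have hΔ' : r * (r - 2*M) + a^2 ≠ 0 := hΔ
  have hD' : r * (r - 2*M) + a^2 - a^2 * Real.sin θ^2 ≠ 0 := hD
  have hs2 : Real.sin θ ^ 2 ≠ 0 := pow_ne_zero _ hs
  ext i j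
  fin_cases i <;> fin_cases j <;>
    simp only [Gram, Hm, Matrix.mul_apply, Fin.sum_univ_two, Matrix.of_apply,
      Matrix.cons_val', Matrix.cons_val_zero, Matrix.cons_val_one, Matrix.head_cons,
      Matrix.head_fin_const, Matrix.empty_val', Matrix.cons_val_fin_one,
      Matrix.one_fin_two, Matrix.one_apply_eq, Matrix.one_apply_ne, Fin.mk_zero, Fin.mk_one,
      g_tt, g_tφ, g_φφ, f, ω, h00, h01, h11, Sig, Δ, Real.cos_sq'] <;>
    · field_simp
      ring

lemma deriv_log_beta (a r θ : ℝ) (hSg : Sig a r θ ≠ 0) :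
    deriv (fun r' => Real.log (β a r' θ)) r = 2*r / Sig a r θ := by
  have h : HasDerivAt (fun r' => Real.log (β a r' θ)) (2*r / Sig a r θ) r :=
    (hasDerivAt_Sig a θ r).log hSg
  exact h.deriv

lemma deriv_eq_zero_of_eventually_eq_const {f : ℝ → ℝ} {x C : ℝ}
    (h : ∀ᶠ y in nhds x, f y = C) : deriv f x = 0 := by
  have h' : f =ᶠ[nhds x] fun _ => C := h
  rw [h'.deriv_eq]
  simp

lemma entry_aux {M a r θ : ℝ} {i j : Fin 2} (hr : r ≠ 0) (hSg : Sig a r θ ≠ 0)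
    {F : ℝ → ℝ} {dF C : ℝ}
    (hev : (fun r' => (Gram M a r' θ)⁻¹ i j) =ᶠ[nhds r] F)
    (hd : HasDerivAt F dF r)
    (hC : F r + (Sig a r θ / (2*r)) * dF = C) :
    (Gram M a r θ)⁻¹ i j
      + (deriv (fun r' => Real.log (β a r' θ)) r)⁻¹
        * deriv (fun r' => (Gram M a r' θ)⁻¹ i j) r = C := by
  have h0 : (Gram M a r θ)⁻¹ i j = F r := hev.self_of_nhds
  rw [deriv_log_beta a r θ hSg, hev.deriv_eq, hd.deriv, h0, inv_div]
  exact hC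

section identities

variable (M a : ℝ) {r θ : ℝ}

lemma idC00 (hr : r ≠ 0) (hΔ : Δ M a r ≠ 0) (hSg : Sig a r θ ≠ 0) :
    h00 M a r θ + (Sig a r θ / (2*r)) * dh00 M a r θ = C00 M a r := by
  unfold h00 dh00 C00 q qp
  field_simp
  ring

lemma idC01 (hr : r ≠ 0) (hΔ : Δ M a r ≠ 0) (hSg : Sig a r θ ≠ 0) :
    h01 M a r θ + (Sig a r θ / (2*r)) * dh01 M a r θ = C01 M a r := by
  unfold h01 dh01 C01 q qp
  field_simp
  ring

lemma idC11 (hr : r ≠ 0) (hΔ : Δ M a r ≠ 0) (hSg : Sig a r θ ≠ 0)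
    (hs : Real.sin θ ≠ 0) :
    h11 M a r θ + (Sig a r θ / (2*r)) * dh11 M a r θ = C11 M a r := by
  have hra : r^2 + a^2 ≠ 0 := by positivity
  have hs2 : Real.sin θ ^ 2 ≠ 0 := pow_ne_zero _ hs
  have hSg' : r^2 + a^2 * (1 - Real.sin θ^2) ≠ 0 := by
    rwa [Sig, Real.cos_sq'] at hSg
  unfold h11 dh11 C11 q qp
  simp only [Sig, Real.cos_sq']
  field_simp
  ring

end identities

/-- The main per-entry computation. -/
lemma entry_value (M a r θ : ℝ) (hΔ : Δ M a r ≠ 0) (hSg : Sig a r θ ≠ 0)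
    (hs : Real.sin θ ≠ 0) (hD : Δ M a r - a^2 * (Real.sin θ)^2 ≠ 0) (hr : r ≠ 0)
    (i j : Fin 2) :
    (Gram M a r θ)⁻¹ i j
      + (deriv (fun r' => Real.log (β a r' θ)) r)⁻¹
        * deriv (fun r' => (Gram M a r' θ)⁻¹ i j) r = Cmat M a r i j := by
  have hΔc : ContinuousAt (fun r' => Δ M a r') r := by unfold Δ; fun_prop
  have hSgc : ContinuousAt (fun r' => Sig a r' θ) r := by unfold Sig; fun_prop
  have hDc : ContinuousAt (fun r' => Δ M a r' - a^2 * (Real.sin θ)^2) r := by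
    unfold Δ; fun_prop
  have hinv : ∀ᶠ r' in nhds r, (Gram M a r' θ)⁻¹ = Hm M a r' θ := by
    filter_upwards [hΔc.eventually_ne hΔ, hSgc.eventually_ne hSg, hDc.eventually_ne hD]
      with r' h1 h2 h3
    exact gram_inv M a r' θ h1 h2 hs h3
  have hq : Sig a r θ * Δ M a r ≠ 0 := mul_ne_zero hSg hΔ
  have hq2 : Sig a r θ * Δ M a r * (Real.sin θ)^2 ≠ 0 :=
    mul_ne_zero hq (pow_ne_zero _ hs)
  fin_cases i <;> fin_cases j
  · refine entry_aux hr hSg (hinv.mono fun r' h => ?_) (hasDerivAt_h00 M a θ hq)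
      (idC00 M a hr hΔ hSg)
    simp [h, Hm]
  · refine entry_aux hr hSg (hinv.mono fun r' h => ?_) (hasDerivAt_h01 M a θ hq)
      (idC01 M a hr hΔ hSg)
    simp [h, Hm]
  · refine entry_aux hr hSg (hinv.mono fun r' h => ?_) (hasDerivAt_h01 M a θ hq)
      (idC01 M a hr hΔ hSg)
    simp [h, Hm]
  · refine entry_aux hr hSg (hinv.mono fun r' h => ?_) (hasDerivAt_h11 M a θ hq2)
      (idC11 M a hr hΔ hSg hs)
    simp [h, Hm]

end KerrAux

/-- For the Kerr metric with `β = Σ`, `λ = Σ/Δ`, on the open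
subset of `U` where `r ≠ 0`:
(a) the compatibility condition `∂_θ(λ·∂_r ln β) = 0` holds, and indeed
`λ·∂_r ln β = 2r/Δ`;
(b) the integrability condition
`∂_θ((𝒢⁻¹)^{ab} + (∂_r ln β)⁻¹·∂_r(𝒢⁻¹)^{ab}) = 0` holds for all `a,b ∈ {t,φ}`. -/
theorem kerr_compatibility_and_integrability (M a : ℝ) :
    ∀ r θ : ℝ,
      Kerr.Δ M a r ≠ 0 →
      Kerr.Sig a r θ ≠ 0 →
      Real.sin θ ≠ 0 →
      Kerr.Δ M a r - a^2 * (Real.sin θ)^2 ≠ 0 →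
      r ≠ 0 →
      -- (a) compatibility
      (Kerr.lam M a r θ * deriv (fun r' => Real.log (Kerr.β a r' θ)) r
          = 2*r / Kerr.Δ M a r
        ∧ deriv (fun θ' =>
            Kerr.lam M a r θ' * deriv (fun r' => Real.log (Kerr.β a r' θ')) r) θ = 0)
      -- (b) integrability
      ∧ (∀ i j : Fin 2,
          deriv (fun θ' =>
            (Kerr.Gram M a r θ')⁻¹ i j
              + (deriv (fun r' => Real.log (Kerr.β a r' θ')) r)⁻¹
                * deriv (fun r' => (Kerr.Gram M a r' θ')⁻¹ i j) r) θ = 0) := by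
  intro r θ hΔ hSg hs hD hr
  have hSgcθ : ContinuousAt (fun θ' => Kerr.Sig a r θ') θ := by unfold Kerr.Sig; fun_prop
  have hscθ : ContinuousAt Real.sin θ := Real.continuous_sin.continuousAt
  have hDcθ : ContinuousAt (fun θ' => Kerr.Δ M a r - a^2 * (Real.sin θ')^2) θ := by
    fun_prop
  have hval : ∀ θ', Kerr.Sig a r θ' ≠ 0 →
      Kerr.lam M a r θ' * deriv (fun r' => Real.log (Kerr.β a r' θ')) r
        = 2*r / Kerr.Δ M a r := by
    intro θ' hSg'
    rw [KerrAux.deriv_log_beta a r θ' hSg', Kerr.lam]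
    field_simp
  constructor
  · constructor
    · exact hval θ hSg
    · refine KerrAux.deriv_eq_zero_of_eventually_eq_const (C := 2*r / Kerr.Δ M a r) ?_
      filter_upwards [hSgcθ.eventually_ne hSg] with θ' h1
      exact hval θ' h1
  · intro i j
    refine KerrAux.deriv_eq_zero_of_eventually_eq_const (C := KerrAux.Cmat M a r i j) ?_
    filter_upwards [hSgcθ.eventually_ne hSg, hscθ.eventually_ne hs, hDcθ.eventually_ne hD]
      with θ' h1 h2 h3
    exact KerrAux.entry_value M a r θ' hΔ h1 h2 h3 hr i j
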